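/- arXiv:cond-mat/0501169 — 3 statements merged into one kernel-verified Lean document; each statement's English description precedes it below -/
import Mathlib

section
/- For a finite simple graph g with edge set E and degree function d, the s-metric s(g) = ∑_{(i,j)∈E} d(i)d(j) is bounded above, over all graphs with a fixed degree sequence d₁ ≥ ... ≥ dₙ, by (1/2)∑ᵢ dᵢ³ when self-loops and parallel edges are allowed; equivalently, for the unconstrained background set of multigraphs with all degrees even, the maximum of s is ∑ᵢ (dᵢ/2)·dᵢ² and is attained by placing dᵢ/2 self-loops at each vertex i. -/
open Finset

/-- Over the unconstrained background set of multigraphs (self-loops and parallel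
edges allowed, a self-loop counting twice toward the degree and contributing `dᵢ²`
to the s-metric), the s-metric of any multigraph with degree sequence `D` is at most
`(1/2)∑ᵢ dᵢ³`, and when all degrees are even this maximum `∑ᵢ (dᵢ/2)·dᵢ²` is attained
by placing `dᵢ/2` self-loops at each vertex. -/
theorem stmt_3 (n : ℕ) (D : Fin n → ℕ) (hEven : ∀ i, Even (D i)) :
    (∀ m : Fin n → Fin n → ℕ, (∀ i j, m i j = m j i) →
      (∀ i, (∑ j, m i j) + m i i = D i) →
      2 * ((∑ p ∈ Finset.univ.filter (fun p : Fin n × Fin n => p.1 < p.2),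
              m p.1 p.2 * (D p.1 * D p.2)) +
           ∑ i, m i i * D i ^ 2) ≤ ∑ i, D i ^ 3) ∧
    (∃ m : Fin n → Fin n → ℕ, (∀ i j, m i j = m j i) ∧
      (∀ i, (∑ j, m i j) + m i i = D i) ∧
      2 * ((∑ p ∈ Finset.univ.filter (fun p : Fin n × Fin n => p.1 < p.2),
              m p.1 p.2 * (D p.1 * D p.2)) +
           ∑ i, m i i * D i ^ 2) = ∑ i, D i ^ 3) := by
  constructor
  · intro m hsym hdeg
    set A := Finset.univ.filter (fun p : Fin n × Fin n => p.1 < p.2) with hA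
    set B := Finset.univ.filter (fun p : Fin n × Fin n => p.2 < p.1) with hB
    -- termwise AM-GM
    have step1 : 2 * ∑ p ∈ A, m p.1 p.2 * (D p.1 * D p.2)
        ≤ ∑ p ∈ A, m p.1 p.2 * (D p.1 ^ 2 + D p.2 ^ 2) := by
      rw [Finset.mul_sum]
      refine Finset.sum_le_sum fun p _ => ?_
      have h := two_mul_le_add_sq (D p.1) (D p.2)
      calc 2 * (m p.1 p.2 * (D p.1 * D p.2))
          = m p.1 p.2 * (2 * D p.1 * D p.2) := by ring
        _ ≤ m p.1 p.2 * (D p.1 ^ 2 + D p.2 ^ 2) := by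
            exact Nat.mul_le_mul_left _ (by nlinarith)
    have swap : ∑ p ∈ A, m p.1 p.2 * D p.2 ^ 2 = ∑ p ∈ B, m p.1 p.2 * D p.1 ^ 2 := by
      refine Finset.sum_bij' (fun p _ => Prod.swap p) (fun p _ => Prod.swap p)
        ?_ ?_ ?_ ?_ ?_
      · intro p hp
        simp only [hA, hB, Finset.mem_filter, Finset.mem_univ, true_and] at hp ⊢
        simpa using hp
      · intro p hp
        simp only [hA, hB, Finset.mem_filter, Finset.mem_univ, true_and] at hp ⊢
        simpa using hp
      · intro p _; simp
      · intro p _; simp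
      · intro p _
        simp [Prod.swap, hsym p.1 p.2]
    have split : ∑ p ∈ A, m p.1 p.2 * D p.1 ^ 2 + ∑ p ∈ B, m p.1 p.2 * D p.1 ^ 2
        = ∑ p ∈ Finset.univ.filter (fun p : Fin n × Fin n => p.1 ≠ p.2),
            m p.1 p.2 * D p.1 ^ 2 := by
      rw [← Finset.sum_union]
      · congr 1
        ext p
        simp only [hA, hB, Finset.mem_union, Finset.mem_filter, Finset.mem_univ, true_and]
        constructor
        · rintro (h | h) <;> [exact ne_of_lt h; exact (ne_of_lt h).symm]
        · intro h; exact lt_or_gt_of_ne h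
      · rw [Finset.disjoint_left]
        intro p hp hq
        simp only [hA, hB, Finset.mem_filter, Finset.mem_univ, true_and] at hp hq
        exact absurd (hp.trans hq) (lt_irrefl _)
    have offdiag : ∑ p ∈ Finset.univ.filter (fun p : Fin n × Fin n => p.1 ≠ p.2),
            m p.1 p.2 * D p.1 ^ 2
        = ∑ i, (∑ j ∈ Finset.univ.erase i, m i j) * D i ^ 2 := by
      rw [Finset.sum_filter, Fintype.sum_prod_type]
      refine Finset.sum_congr rfl fun i _ => ?_
      rw [Finset.sum_mul]
      rw [← Finset.sum_filter]
      refine Finset.sum_congr ?_ fun j _ => rfl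
      ext j
      simp [ne_comm]
    have hkey : ∀ i, (∑ j ∈ Finset.univ.erase i, m i j) + 2 * m i i = D i := by
      intro i
      have h : (∑ j ∈ Finset.univ.erase i, m i j) + m i i = ∑ j, m i j :=
        Finset.sum_erase_add Finset.univ (fun j => m i j) (Finset.mem_univ i)
      have := hdeg i
      omega
    calc 2 * ((∑ p ∈ A, m p.1 p.2 * (D p.1 * D p.2)) + ∑ i, m i i * D i ^ 2)
        = 2 * ∑ p ∈ A, m p.1 p.2 * (D p.1 * D p.2) + 2 * ∑ i, m i i * D i ^ 2 := by ring
      _ ≤ (∑ p ∈ A, m p.1 p.2 * (D p.1 ^ 2 + D p.2 ^ 2)) + 2 * ∑ i, m i i * D i ^ 2 :=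
          Nat.add_le_add_right step1 _
      _ = (∑ p ∈ A, m p.1 p.2 * D p.1 ^ 2 + ∑ p ∈ B, m p.1 p.2 * D p.1 ^ 2)
            + 2 * ∑ i, m i i * D i ^ 2 := by
          rw [← swap, ← Finset.sum_add_distrib]
          congr 1
          exact Finset.sum_congr rfl fun p _ => by ring
      _ = (∑ i, (∑ j ∈ Finset.univ.erase i, m i j) * D i ^ 2)
            + ∑ i, 2 * m i i * D i ^ 2 := by
          rw [split, offdiag, Finset.mul_sum]
          congr 1
          exact Finset.sum_congr rfl fun i _ => by ring
      _ = ∑ i, ((∑ j ∈ Finset.univ.erase i, m i j) + 2 * m i i) * D i ^ 2 := by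
          rw [← Finset.sum_add_distrib]
          exact Finset.sum_congr rfl fun i _ => by ring
      _ = ∑ i, D i ^ 3 := by
          refine Finset.sum_congr rfl fun i _ => ?_
          rw [hkey i]; ring
  · refine ⟨fun i j => if i = j then D i / 2 else 0, ?_, ?_, ?_⟩
    · intro i j
      by_cases h : i = j <;> simp [h, Ne.symm, eq_comm]
    · intro i
      obtain ⟨k, hk⟩ := hEven i
      have hhalf : D i / 2 = k := by omega
      simp [Finset.sum_ite_eq' Finset.univ i, hhalf]
      omega
    · have h1 : ∑ p ∈ Finset.univ.filter (fun p : Fin n × Fin n => p.1 < p.2),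
          (if p.1 = p.2 then D p.1 / 2 else 0) * (D p.1 * D p.2) = 0 := by
        refine Finset.sum_eq_zero fun p hp => ?_
        simp only [Finset.mem_filter] at hp
        simp [ne_of_lt hp.2]
      rw [h1, zero_add, Finset.mul_sum]
      refine Finset.sum_congr rfl fun i _ => ?_
      obtain ⟨k, hk⟩ := hEven i
      have hhalf : D i / 2 = k := by omega
      show 2 * ((if i = i then D i / 2 else 0) * D i ^ 2) = D i ^ 3
      rw [if_pos rfl, hhalf, hk]
      ring
end

section
/- Let g be a tree on n vertices rooted at a vertex of maximum degree that maximizes s(g) = ∑_{(i,j)∈E} dᵢdⱼ among all trees with the given degree sequence. If u and v are vertices with d_u > d_v, then v cannot be a strict ancestor (upstream vertex) of u. -/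
open Finset

/-- The s-metric `s(g) = ∑_{(i,j)∈E} dᵢdⱼ` of a graph. -/
def sMetric {n : ℕ} (G : SimpleGraph (Fin n)) [DecidableRel G.Adj] : ℕ :=
  ∑ e ∈ G.edgeFinset,
    Sym2.lift ⟨fun i j => G.degree i * G.degree j, fun _ _ => mul_comm _ _⟩ e

/-
Suppose some vertex has a strictly lower-degree vertex on its path to the root, and let `a` be
such a vertex at maximal distance from the root. Along the path from `a` to the root the degree
drops below `deg a` and then (the root having maximal degree) climbs back to at least `deg a`:
there is an edge `cd` of the path with `deg c < deg a ≤ deg d`. As `deg a ≥ 2`, `a` has a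
neighbour `b` off the path, and `deg b ≤ deg c` since otherwise `b` would be a deeper such vertex.
The 2-switch trading the edges `ab`, `cd` for `ad`, `cb` yields a tree with the same degrees,
and it changes `s` by `(deg a - deg c) (deg d - deg b) > 0`, contradicting the maximality of `s`.
-/
namespace SimpleGraph

variable {V : Type*} {G : SimpleGraph V} {a b c d : V}

def twoSwitch (G : SimpleGraph V) (a b c d : V) : SimpleGraph V :=
  G.deleteEdges {s(a, b), s(c, d)} ⊔ fromEdgeSet {s(a, d), s(c, b)}

structure IsSwitchable (G : SimpleGraph V) (a b c d : V) : Prop where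
  adj_ab : G.Adj a b
  adj_cd : G.Adj c d
  not_adj_ad : ¬G.Adj a d
  not_adj_cb : ¬G.Adj c b
  ne_ad : a ≠ d
  ne_cb : c ≠ b

namespace IsSwitchable

variable (h : G.IsSwitchable a b c d)
include h

lemma edgeSet_twoSwitch :
    (G.twoSwitch a b c d).edgeSet = G.edgeSet \ {s(a, b), s(c, d)} ∪ {s(a, d), s(c, b)} := by
  rw [twoSwitch, edgeSet_sup, edgeSet_deleteEdges, edgeSet_fromEdgeSet]
  congr 1
  exact sdiff_eq_left.mpr (by simp [h.ne_ad, h.ne_cb])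

lemma sum_edgeFinset_twoSwitch [DecidableEq V] [Fintype G.edgeSet]
    [Fintype (G.twoSwitch a b c d).edgeSet] {M : Type*} [AddCommMonoid M] (φ : Sym2 V → M) :
    ∑ e ∈ (G.twoSwitch a b c d).edgeFinset, φ e + (φ s(a, b) + φ s(c, d)) =
      ∑ e ∈ G.edgeFinset, φ e + (φ s(a, d) + φ s(c, b)) := by
  have hold : s(a, b) ≠ s(c, d) := by
    intro he
    rcases Sym2.eq_iff.mp he with ⟨rfl, rfl⟩ | ⟨rfl, rfl⟩
    · exact h.not_adj_cb h.adj_ab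
    · exact h.ne_ad rfl
  have hnew : s(a, d) ≠ s(c, b) := by
    intro he
    rcases Sym2.eq_iff.mp he with ⟨rfl, rfl⟩ | ⟨rfl, rfl⟩
    · exact h.not_adj_ad h.adj_ab
    · exact h.adj_ab.ne rfl
  have hsub : {s(a, b), s(c, d)} ⊆ G.edgeFinset := by
    simp [insert_subset_iff, h.adj_ab, h.adj_cd]
  have hdisj : Disjoint (G.edgeFinset \ {s(a, b), s(c, d)}) {s(a, d), s(c, b)} := by
    simp [disjoint_insert_right, h.not_adj_ad, h.not_adj_cb]
  have hE : (G.twoSwitch a b c d).edgeFinset =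
      G.edgeFinset \ {s(a, b), s(c, d)} ∪ {s(a, d), s(c, b)} := by
    ext e
    simp [← mem_coe, h.edgeSet_twoSwitch]
  rw [hE, sum_union hdisj, ← sum_sdiff hsub, sum_pair hold, sum_pair hnew]
  abel

lemma degree_twoSwitch [Fintype V] [DecidableEq V] [DecidableRel G.Adj]
    [DecidableRel (G.twoSwitch a b c d).Adj] (x : V) :
    (G.twoSwitch a b c d).degree x = G.degree x := by
  have key := h.sum_edgeFinset_twoSwitch fun e => if x ∈ e then 1 else 0
  have hcount : ((if x ∈ s(a, b) then 1 else 0) + if x ∈ s(c, d) then 1 else 0) =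
      ((if x ∈ s(a, d) then 1 else 0) + if x ∈ s(c, b) then 1 else 0) := by
    have := h.adj_ab.ne
    have := h.adj_cd.ne
    simp only [Sym2.mem_iff]
    split_ifs <;> grind [h.ne_ad, h.ne_cb]
  rw [← card_incidenceFinset_eq_degree, incidenceFinset_eq_filter, card_filter,
    ← card_incidenceFinset_eq_degree, incidenceFinset_eq_filter, card_filter]
  omega

lemma connected_twoSwitch (hG : G.Connected) (W : G.Walk a c) (hWab : s(a, b) ∉ W.edges)
    (hWcd : s(c, d) ∉ W.edges) : (G.twoSwitch a b c d).Connected := by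
  set G' := G.twoSwitch a b c d
  have hle : G.deleteEdges {s(a, b), s(c, d)} ≤ G' := le_sup_left
  have hac : G'.Reachable a c :=
    ((W.toDeleteEdges _ fun e he hmem => by
      rcases hmem with rfl | rfl
      exacts [hWab he, hWcd he]).reachable).mono hle
  have had : G'.Adj a d := Or.inr (by simp [h.ne_ad])
  have hcb : G'.Adj c b := Or.inr (by simp [h.ne_cb])
  have hstep : ∀ x y, G.Adj x y → G'.Reachable x y := by
    intro x y hxy
    by_cases hx : s(x, y) = s(a, b)
    · rcases Sym2.eq_iff.mp hx with ⟨rfl, rfl⟩ | ⟨rfl, rfl⟩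
      · exact hac.trans hcb.reachable
      · exact (hac.trans hcb.reachable).symm
    by_cases hy : s(x, y) = s(c, d)
    · rcases Sym2.eq_iff.mp hy with ⟨rfl, rfl⟩ | ⟨rfl, rfl⟩
      · exact hac.symm.trans had.reachable
      · exact (hac.symm.trans had.reachable).symm
    exact Adj.reachable (hle (by simp [hxy, hx, hy]))
  have := hG.nonempty
  refine ⟨fun x y => ?_⟩
  simp only [reachable_iff_reflTransGen] at hstep ⊢
  exact Relation.ReflTransGen.lift' id hstep x y
    ((reachable_iff_reflTransGen x y).mp (hG.preconnected x y))

lemma isTree_twoSwitch [Finite V] (hG : G.IsTree) (W : G.Walk a c) (hWab : s(a, b) ∉ W.edges)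
    (hWcd : s(c, d) ∉ W.edges) : (G.twoSwitch a b c d).IsTree := by
  classical
  have := Fintype.ofFinite V
  rw [isTree_iff_connected_and_card] at hG ⊢
  refine ⟨h.connected_twoSwitch hG.1 W hWab hWcd, ?_⟩
  have key := h.sum_edgeFinset_twoSwitch fun _ => 1
  simp only [sum_const, smul_eq_mul, mul_one, add_left_inj] at key
  rw [← hG.2, Nat.card_eq_fintype_card, Nat.card_eq_fintype_card, ← edgeFinset_card,
    ← edgeFinset_card, key]

end IsSwitchable

lemma Walk.exists_eq_append_cons_of_mem_support {u v : V} {q : V → Prop} {p : G.Walk u v}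
    (hx : ∃ x ∈ p.support, q x) (hv : ¬q v) :
    ∃ (y z : V) (hyz : G.Adj y z) (p₁ : G.Walk u y) (p₂ : G.Walk z v),
      q y ∧ ¬q z ∧ p = p₁.append (cons hyz p₂) := by
  induction p with
  | nil =>
    obtain ⟨x, hx, hqx⟩ := hx
    rw [support_nil, List.mem_singleton] at hx
    exact absurd (hx ▸ hqx) hv
  | @cons u w v huw p ih =>
    by_cases hp : ∃ x ∈ p.support, q x
    · obtain ⟨y, z, hyz, p₁, p₂, hy, hz, rfl⟩ := ih hp hv
      exact ⟨y, z, hyz, cons huw p₁, p₂, hy, hz, rfl⟩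
    · push Not at hp
      obtain ⟨x, hx, hqx⟩ := hx
      rcases List.mem_cons.mp (support_cons _ _ ▸ hx) with rfl | hx
      · exact ⟨x, w, huw, nil, p, hqx, hp w p.start_mem_support, rfl⟩
      · exact absurd hqx (hp x hx)

namespace IsAcyclic

variable (hG : G.IsAcyclic)
include hG

lemma length_eq_dist {u v : V} {p : G.Walk u v} (hp : p.IsPath) : p.length = G.dist u v := by
  obtain ⟨q, hq, hlen⟩ := p.reachable.exists_path_of_dist
  rw [← hlen, Subtype.mk.inj (hG.subsingleton_path u v |>.elim ⟨p, hp⟩ ⟨q, hq⟩)]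

lemma not_adj_of_isPath {u v : V} {p : G.Walk u v} (hp : p.IsPath) (hlen : 2 ≤ p.length) :
    ¬G.Adj u v := fun huv => by
  have hdist :=
    hG.length_eq_dist ((Walk.IsPath.nil (u := v)).cons (by simpa using huv.ne) (h := huv))
  rw [Walk.length_cons, Walk.length_nil, ← hG.length_eq_dist hp] at hdist
  omega

lemma exists_adj_notMem_support {u v : V} [Fintype (G.neighborSet u)] {p : G.Walk u v}
    (hp : p.IsPath) (hdeg : 2 ≤ G.degree u) : ∃ w, G.Adj u w ∧ w ∉ p.support := by
  by_contra! hall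
  have hsub : G.neighborFinset u ⊆ {p.snd} := fun w hw =>
    mem_singleton.mpr (hG.eq_snd_of_adj_start hp ((mem_neighborFinset ..).mp hw)
      (hall w ((mem_neighborFinset ..).mp hw)))
  have := card_le_card hsub
  rw [card_neighborFinset_eq_degree, card_singleton] at this
  omega

lemma isSwitchable {a b c d : V} (hba : G.Adj b a) (hcd : G.Adj c d) (W : G.Walk a c)
    (hW : W.IsPath) (hac : a ≠ c) (hbW : b ∉ W.support) (hdW : d ∉ W.support) :
    G.IsSwitchable a b c d := by
  have hlen : 1 ≤ W.length := by
    cases W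
    exacts [absurd rfl hac, by simp]
  exact {
    adj_ab := hba.symm
    adj_cd := hcd
    not_adj_ad := hG.not_adj_of_isPath (hW.concat hdW hcd) (by simpa using hlen)
    not_adj_cb := fun hcb => hG.not_adj_of_isPath (hW.cons hbW (h := hba)) (by simpa using hlen)
      hcb.symm
    ne_ad := fun h => hdW (h ▸ W.start_mem_support)
    ne_cb := fun h => hbW (h ▸ W.end_mem_support) }

end IsAcyclic

section Rooted

variable [Fintype V] [DecidableRel G.Adj]

def HasLowerDegreeAncestor (G : SimpleGraph V) [DecidableRel G.Adj] (r x : V) : Prop :=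
  ∃ p : G.Walk x r, p.IsPath ∧ ∃ w ∈ p.support, G.degree w < G.degree x

lemma IsAcyclic.degree_le_of_forall_dist_le (hG : G.IsAcyclic) {r a b y : V}
    (hdeep : ∀ x, G.HasLowerDegreeAncestor r x → G.dist x r ≤ G.dist a r)
    {P : G.Walk a r} (hP : P.IsPath) (hy : y ∈ P.support) (hab : G.Adj a b)
    (hb : b ∉ P.support) : G.degree b ≤ G.degree y := by
  by_contra! hlt
  have hP' : (Walk.cons hab.symm P).IsPath := hP.cons hb
  have := hdeep b ⟨_, hP', y, by simp [hy], hlt⟩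
  rw [← hG.length_eq_dist hP, ← hG.length_eq_dist hP', Walk.length_cons] at this
  omega

lemma IsTree.exists_isSwitchable (hG : G.IsTree) {r x : V}
    (hr : ∀ i, G.degree i ≤ G.degree r) (hx : G.HasLowerDegreeAncestor r x) :
    ∃ a b c d, G.IsSwitchable a b c d ∧
      (∃ W : G.Walk a c, s(a, b) ∉ W.edges ∧ s(c, d) ∉ W.edges) ∧
      G.degree c < G.degree a ∧ G.degree b < G.degree d := by
  classical
  obtain ⟨a, ha, hdeep⟩ := exists_max_image {x | G.HasLowerDegreeAncestor r x} (G.dist · r)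
    ⟨x, by simpa using hx⟩
  simp only [mem_filter, mem_univ, true_and] at ha hdeep
  obtain ⟨P, hP, w, hw, hwa⟩ := ha
  obtain ⟨c, d, hcd, W, P₂, hca, hdc, rfl⟩ := Walk.exists_eq_append_cons_of_mem_support
    (q := fun y => G.degree y < G.degree a) ⟨w, hw, hwa⟩ (not_lt.mpr (hr a))
  have hW : W.IsPath := hP.of_append_left
  have hdW : d ∉ W.support := fun h => hP.ne_of_mem_support_of_append hcd.ne' h (by simp) rfl
  have hdeg : 2 ≤ G.degree a := by
    have := (G.degree_pos_iff_exists_adj c).mpr ⟨d, hcd⟩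
    omega
  obtain ⟨b, hab, hb⟩ := hG.isAcyclic.exists_adj_notMem_support hP hdeg
  have hbW : b ∉ W.support := fun h => hb (by simp [h])
  have hbc := hG.isAcyclic.degree_le_of_forall_dist_le hdeep hP (y := c) (by simp) hab hb
  refine ⟨a, b, c, d,
    hG.isAcyclic.isSwitchable hab.symm hcd W hW (fun h => (h ▸ hca).false) hbW hdW,
    ⟨W, fun h => hbW (W.snd_mem_support_of_mem_edges h),
      fun h => hdW (W.snd_mem_support_of_mem_edges h)⟩, hca, by omega⟩

end Rooted

end SimpleGraph

open SimpleGraph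

lemma SimpleGraph.IsSwitchable.sMetric_lt_twoSwitch {n : ℕ} {G : SimpleGraph (Fin n)}
    [DecidableRel G.Adj] {a b c d : Fin n} [DecidableRel (G.twoSwitch a b c d).Adj]
    (h : G.IsSwitchable a b c d) (hca : G.degree c < G.degree a)
    (hbd : G.degree b < G.degree d) : sMetric G < sMetric (G.twoSwitch a b c d) := by
  have key := h.sum_edgeFinset_twoSwitch
    (Sym2.lift ⟨fun i j => G.degree i * G.degree j, fun _ _ => mul_comm _ _⟩)
  simp only [Sym2.lift_mk] at key
  simp only [sMetric, h.degree_twoSwitch]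
  linarith [mul_add_mul_lt_mul_add_mul hca hbd]

/-- In an `s_max` tree rooted at a vertex of maximum degree, a vertex of strictly
smaller degree cannot be a strict ancestor (upstream vertex) of a vertex of larger
degree. -/
theorem stmt_12 (n : ℕ) (G : SimpleGraph (Fin n)) [DecidableRel G.Adj]
    (hT : G.IsTree)
    (hmax : ∀ (G' : SimpleGraph (Fin n)) [DecidableRel G'.Adj], G'.IsTree →
      (∀ i, G'.degree i = G.degree i) → sMetric G' ≤ sMetric G)
    (r : Fin n) (hr : ∀ i, G.degree i ≤ G.degree r)
    (u v : Fin n) (huv : G.degree v < G.degree u) :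
    ¬ ∃ p : G.Walk u r, p.IsPath ∧ v ≠ u ∧ v ∈ p.support := by
  classical
  rintro ⟨p, hp, -, hv⟩
  obtain ⟨a, b, c, d, h, ⟨W, hWab, hWcd⟩, hca, hbd⟩ :=
    hT.exists_isSwitchable hr ⟨p, hp, v, hv, huv⟩
  exact (hmax _ (h.isTree_twoSwitch hT W hWab hWcd) h.degree_twoSwitch).not_gt
    (h.sMetric_lt_twoSwitch hca hbd)
end

section
/- For a finite positive sequence y = (y₁,...,yₙ) following the exact scaling relation k = c·yₖ^{−α} (so yₖ = (c/k)^{1/α}) with 0 < α < 2, the sample coefficient of variation CV(y) = STD(y)/mean(y) diverges as n → ∞; i.e., for every M > 0 there exists N such that CV(y) > M for all n ≥ N when α ≤ 1, and more generally the second sample moment grows faster than the square of the mean for α < 2. -/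
open Finset Filter

/-! Put `p = 1/α > 1/2`, so `yₖ = c^p k^{-p}`. Concavity of `x ↦ x^{1-r}` bounds
`(1 - r) ∑_{k ≤ n} k^{-r}` by `n^{1-r}`; choosing `1/2 < r ≤ p` with `r < 1`, the sum `∑ yₖ` is
`O(n^{1-r})` while `∑ yₖ² ≥ y₁²`, so the normalized second moment `n ∑ yₖ² / (∑ yₖ)²` grows at
least like `n^{2r-1}`. The squared sample CV is `n/(n-1)` times (normalized second moment − 1),
so it diverges too. -/

lemma one_sub_mul_rpow_neg_le_rpow_sub_rpow {r x : ℝ} (hr₀ : 0 ≤ r) (hr₁ : r ≤ 1) (hx : 0 ≤ x) :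
    (1 - r) * (x + 1) ^ (-r) ≤ (x + 1) ^ (1 - r) - x ^ (1 - r) := by
  have hx₁ : 0 < x + 1 := by linarith
  have amgm : x ^ (1 - r) * (x + 1) ^ r ≤ (1 - r) * x + r * (x + 1) :=
    Real.geom_mean_le_arith_mean2_weighted (by linarith) hr₀ hx hx₁.le (by ring)
  have hinv : (x + 1) ^ r * (x + 1) ^ (-r) = 1 := by
    rw [← Real.rpow_add hx₁, add_neg_cancel, Real.rpow_zero]
  have hsucc : (x + 1) ^ (1 - r) = (x + 1) * (x + 1) ^ (-r) := by
    rw [sub_eq_add_neg, Real.rpow_add hx₁, Real.rpow_one]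
  have := mul_le_mul_of_nonneg_right amgm (Real.rpow_nonneg hx₁.le (-r))
  rw [mul_assoc, hinv, mul_one] at this
  rw [hsucc]
  linarith

lemma one_sub_mul_sum_Icc_rpow_neg_le {r : ℝ} (hr₀ : 0 ≤ r) (hr₁ : r ≤ 1) (n : ℕ) :
    (1 - r) * ∑ k ∈ Icc 1 n, (k : ℝ) ^ (-r) ≤ (n : ℝ) ^ (1 - r) := by
  induction n with
  | zero => simpa using Real.rpow_nonneg le_rfl (1 - r)
  | succ n ih =>
    rw [sum_Icc_succ_top (by omega), mul_add, Nat.cast_succ]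
    linarith [one_sub_mul_rpow_neg_le_rpow_sub_rpow hr₀ hr₁ n.cast_nonneg]

lemma tendsto_card_div_sq_sum_Icc_rpow_neg {p : ℝ} (hp : 1 / 2 < p) :
    Tendsto (fun n : ℕ => (n : ℝ) / (∑ k ∈ Icc 1 n, (k : ℝ) ^ (-p)) ^ 2) atTop atTop := by
  set r := min p (3 / 4)
  have hr : 1 / 2 < r := lt_min hp (by norm_num)
  have hr₁ : r < 1 := (min_le_right _ _).trans_lt (by norm_num)
  have hlower : Tendsto (fun n : ℕ => (1 - r) ^ 2 * (n : ℝ) ^ (2 * r - 1)) atTop atTop :=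
    ((tendsto_rpow_atTop (by linarith)).comp tendsto_natCast_atTop_atTop).const_mul_atTop
      (by nlinarith)
  refine tendsto_atTop_mono' _ ?_ hlower
  filter_upwards [eventually_ge_atTop 1] with n hn
  have hn₀ : (0 : ℝ) < n := by exact_mod_cast hn
  have hsum_pos : 0 < ∑ k ∈ Icc 1 n, (k : ℝ) ^ (-p) :=
    sum_pos (fun k hk => Real.rpow_pos_of_pos (by exact_mod_cast (mem_Icc.1 hk).1) _)
      ⟨1, mem_Icc.2 ⟨le_rfl, hn⟩⟩
  have hsum_le : (1 - r) * ∑ k ∈ Icc 1 n, (k : ℝ) ^ (-p) ≤ (n : ℝ) ^ (1 - r) := by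
    refine le_trans ?_ (one_sub_mul_sum_Icc_rpow_neg_le (by linarith) hr₁.le n)
    gcongr with k hk
    · exact_mod_cast (mem_Icc.1 hk).1
    · exact min_le_left _ _
  have hpow : (n : ℝ) ^ (2 * r - 1) * ((n : ℝ) ^ (1 - r)) ^ 2 = n := by
    rw [sq, ← Real.rpow_add hn₀, ← Real.rpow_add hn₀]
    ring_nf
    exact Real.rpow_one _
  rw [le_div_iff₀ (pow_pos hsum_pos 2)]
  calc (1 - r) ^ 2 * (n : ℝ) ^ (2 * r - 1) * (∑ k ∈ Icc 1 n, (k : ℝ) ^ (-p)) ^ 2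
      = (n : ℝ) ^ (2 * r - 1) * ((1 - r) * ∑ k ∈ Icc 1 n, (k : ℝ) ^ (-p)) ^ 2 := by ring
    _ ≤ (n : ℝ) ^ (2 * r - 1) * ((n : ℝ) ^ (1 - r)) ^ 2 := by gcongr
    _ = n := hpow

lemma sum_sq_sub_mean {ι : Type*} (s : Finset ι) (y : ι → ℝ) :
    ∑ i ∈ s, (y i - (1 / #s) * ∑ j ∈ s, y j) ^ 2
      = ∑ i ∈ s, y i ^ 2 - #s * ((1 / #s) * ∑ j ∈ s, y j) ^ 2 := by
  rcases s.eq_empty_or_nonempty with rfl | hs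
  · simp
  have hcard : (#s : ℝ) ≠ 0 := by exact_mod_cast hs.card_pos.ne'
  simp only [sub_sq, sum_add_distrib, sum_sub_distrib, ← sum_mul, ← mul_sum, sum_const,
    nsmul_eq_mul]
  field_simp
  ring

lemma sqrt_sub_one_le_std_div_mean {ι : Type*} (s : Finset ι) (y : ι → ℝ) (hs : 1 < #s)
    (hsum : 0 < ∑ i ∈ s, y i) :
    √(((1 / #s) * ∑ i ∈ s, y i ^ 2) / ((1 / #s) * ∑ i ∈ s, y i) ^ 2 - 1)
      ≤ √((1 / ((#s : ℝ) - 1)) * ∑ i ∈ s, (y i - (1 / #s) * ∑ j ∈ s, y j) ^ 2)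
        / ((1 / #s) * ∑ i ∈ s, y i) := by
  have hQ := sum_sq_sub_mean s y
  set m := (1 / (#s : ℝ)) * ∑ i ∈ s, y i
  set D := ∑ i ∈ s, (y i - m) ^ 2
  have hn : (1 : ℝ) < #s := by exact_mod_cast hs
  have hm : 0 < m := by positivity
  have hD : 0 ≤ D := sum_nonneg fun i _ => sq_nonneg _
  calc √(((1 / #s) * ∑ i ∈ s, y i ^ 2) / m ^ 2 - 1) ≤ √((1 / ((#s : ℝ) - 1)) * D / m ^ 2) := by
        refine Real.sqrt_le_sqrt ?_
        calc ((1 / #s) * ∑ i ∈ s, y i ^ 2) / m ^ 2 - 1 = D / (#s * m ^ 2) := by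
              rw [hQ]; field_simp
          _ ≤ D / ((#s - 1) * m ^ 2) := by gcongr; linarith
          _ = (1 / ((#s : ℝ) - 1)) * D / m ^ 2 := by field_simp
    _ = √((1 / ((#s : ℝ) - 1)) * D) / m := by
        rw [Real.sqrt_div' _ (sq_nonneg m), Real.sqrt_sq hm.le]

lemma card_mul_sq_div_sq_sum_le {ι : Type*} {s : Finset ι} (y : ι → ℝ) {i : ι} (hi : i ∈ s) :
    #s * y i ^ 2 / (∑ j ∈ s, y j) ^ 2
      ≤ ((1 / #s) * ∑ j ∈ s, y j ^ 2) / ((1 / #s) * ∑ j ∈ s, y j) ^ 2 := by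
  have hcard : (#s : ℝ) ≠ 0 := by exact_mod_cast (card_pos.2 ⟨i, hi⟩).ne'
  calc #s * y i ^ 2 / (∑ j ∈ s, y j) ^ 2 ≤ #s * (∑ j ∈ s, y j ^ 2) / (∑ j ∈ s, y j) ^ 2 := by
        gcongr
        exact single_le_sum (fun j _ => sq_nonneg (y j)) hi
    _ = _ := by field_simp

lemma sum_Icc_div_rpow {c : ℝ} (hc : 0 ≤ c) (p : ℝ) (n : ℕ) :
    ∑ k ∈ Icc 1 n, (c / k) ^ p = c ^ p * ∑ k ∈ Icc 1 n, (k : ℝ) ^ (-p) := by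
  rw [mul_sum]
  refine sum_congr rfl fun k _ => ?_
  rw [Real.div_rpow hc k.cast_nonneg, Real.rpow_neg k.cast_nonneg, div_eq_mul_inv]

/-- For the deterministic scaling sequence `yₖ = (c/k)^{1/α}` with `0 < α < 2`, the
sample coefficient of variation `CV = STD/mean` diverges as `n → ∞`, and the normalized
second moment `(1/n)∑yₖ² / ((1/n)∑yₖ)²` tends to infinity. -/
theorem stmt_18 (c α : ℝ) (hc : 0 < c) (hα : 0 < α) (hα2 : α < 2) :
    let y : ℕ → ℝ := fun k => (c / k) ^ (1 / α)
    let mean : ℕ → ℝ := fun n => (1 / (n : ℝ)) * ∑ k ∈ Finset.Icc 1 n, y k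
    let std : ℕ → ℝ := fun n =>
      Real.sqrt ((1 / ((n : ℝ) - 1)) * ∑ k ∈ Finset.Icc 1 n, (y k - mean n) ^ 2)
    Tendsto (fun n => std n / mean n) atTop atTop ∧
    Tendsto (fun n : ℕ => ((1 / (n : ℝ)) * ∑ k ∈ Finset.Icc 1 n, y k ^ 2) / (mean n) ^ 2)
      atTop atTop := by
  intro y mean std
  have hp : 1 / 2 < 1 / α := by rw [div_lt_div_iff₀ two_pos hα]; linarith
  have hy₁ : y 1 = c ^ (1 / α) := by simp [y]
  have hmoment : Tendsto (fun n : ℕ => ((1 / (n : ℝ)) * ∑ k ∈ Icc 1 n, y k ^ 2) / (mean n) ^ 2)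
      atTop atTop := by
    refine tendsto_atTop_mono' _ ?_ (tendsto_card_div_sq_sum_Icc_rpow_neg hp)
    filter_upwards [eventually_ge_atTop 1] with n hn
    have hc' : c ^ (1 / α) ≠ 0 := (Real.rpow_pos_of_pos hc _).ne'
    calc (n : ℝ) / (∑ k ∈ Icc 1 n, (k : ℝ) ^ (-(1 / α))) ^ 2
        = n * y 1 ^ 2 / (∑ k ∈ Icc 1 n, y k) ^ 2 := by
          rw [sum_Icc_div_rpow hc.le, hy₁]; field_simp
      _ ≤ _ := by
          simpa only [Nat.card_Icc, Nat.add_sub_cancel] using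
            card_mul_sq_div_sq_sum_le y (left_mem_Icc.2 hn)
  refine ⟨tendsto_atTop_mono' _ ?_
    (Real.tendsto_sqrt_atTop.comp (tendsto_atTop_add_const_right _ (-1) hmoment)), hmoment⟩
  filter_upwards [eventually_ge_atTop 2] with n hn
  have hsum : 0 < ∑ k ∈ Icc 1 n, y k :=
    sum_pos (fun k hk => Real.rpow_pos_of_pos
      (div_pos hc (by exact_mod_cast (mem_Icc.1 hk).1)) _) ⟨1, mem_Icc.2 ⟨le_rfl, by omega⟩⟩
  have hcv := sqrt_sub_one_le_std_div_mean (Icc 1 n) y (by simp; omega) hsum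
  rw [Nat.card_Icc, Nat.add_sub_cancel] at hcv
  exact hcv
end
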